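/- On ℝ⁶ with coordinates (x₁,…,x₆) = (γ₁,γ₂,γ₃,M₁,M₂,M₃), define the constant trivector T^{abc} = ∑_{i,j,k=1}^{3} ε_{ijk} (∂_i ∧ ∂_{j+3} ∧ ∂_{k+3})^{abc}, where (u∧v∧w)^{abc} = u_a(v_bw_c − v_cw_b) − u_b(v_aw_c − v_cw_a) + u_c(v_aw_b − v_bw_a). Let X = (2γ₃M₂−4γ₂M₃, −2γ₃M₁+4γ₁M₃, 2γ₂M₁−2γ₁M₂, −2M₂M₃, 2M₁M₃−aγ₃, aγ₂) be the Kovalevskaya vector field, f₂ = γ₁M₁+γ₂M₂+γ₃M₃, f₃ = M₁²+M₂²+2M₃²+aγ₁, and let P_c be the antisymmetric matrix field with entries (i,j) ↦ 0 for i,j ≤ 3, (i,j+3) ↦ ∑_k ε_{ijk}γ_k, (i+3,j+3) ↦ ∑_k ε_{ijk}M_k. Then at every point: (a) ∑_{c=1}^{6} T^{abc} ∂f₂/∂x_c = 2(P_c)_{ab} for all a,b; (b) ∑_{b,c=1}^{6} T^{abc} (∂f₂/∂x_b)(∂f₃/∂x_c) = −2X_a for all a; (c) the conditional invariance ∑_{c=1}^{6}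 (L_X T)^{abc} ∂f₂/∂x_c = 0 holds for all a,b, where (L_X T)^{abc} = −∑_ℓ ( (∂X_a/∂x_ℓ) T^{ℓbc} + (∂X_b/∂x_ℓ) T^{aℓc} + (∂X_c/∂x_ℓ) T^{abℓ} ). -/

import Mathlib

/-!
Writing `T = 2 (∂γ₁ ∧ ∂M₂ ∧ ∂M₃ + ∂γ₂ ∧ ∂M₃ ∧ ∂M₁ + ∂γ₃ ∧ ∂M₁ ∧ ∂M₂)` and expanding the contraction
of a triple wedge with a covector, `T df₂ = 2 P_c` because `∇f₂ = (M, γ)`: this is (a).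
Since `T` is antisymmetric and `X = P_c ∇f₃` is the `P_c`-Hamiltonian field of `f₃`, (b) follows
from (a).

For (c), the coordinate expansion of `(L_X T) df₂`, with (a) used twice, gives
`-2 (J P_c + P_c Jᵀ) - T (Jᵀ ∇f₂)`, where `J` is the Jacobian of `X`. Differentiating `X f₂ = 0` gives
`Jᵀ ∇f₂ = -Hess(f₂) X = -∇f₂(X)`, so by (a) at the point `X` the last term is `2 P_c(X)`. Hence
`(L_X T) df₂ = -2 (J P_c + P_c Jᵀ - P_c(X)) = -2 L_X P_c`, which vanishes since a Hamiltonian field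
preserves the Poisson bivector.
-/

noncomputable section

open scoped BigOperators

/-- Partial derivative of `f` in the `i`-th coordinate direction at `x`. -/
def pd {n : ℕ} (i : Fin n) (f : (Fin n → ℝ) → ℝ) (x : Fin n → ℝ) : ℝ :=
  fderiv ℝ f x (Pi.single i 1)

/-- The Kovalevskaya vector field on `ℝ⁶` with coordinates
`(x₁,…,x₆) = (γ₁,γ₂,γ₃,M₁,M₂,M₃)`. -/
def kovX (a : ℝ) (x : Fin 6 → ℝ) : Fin 6 → ℝ :=
  ![2 * x 2 * x 4 - 4 * x 1 * x 5, -(2 * x 2 * x 3) + 4 * x 0 * x 5,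
    2 * x 1 * x 3 - 2 * x 0 * x 4, -(2 * x 4 * x 5), 2 * x 3 * x 5 - a * x 2,
    a * x 1]

/-- `f₁ = γ₁² + γ₂² + γ₃²`. -/
def kovF₁ (x : Fin 6 → ℝ) : ℝ := x 0 ^ 2 + x 1 ^ 2 + x 2 ^ 2

/-- `f₂ = γ₁M₁ + γ₂M₂ + γ₃M₃`. -/
def kovF₂ (x : Fin 6 → ℝ) : ℝ := x 0 * x 3 + x 1 * x 4 + x 2 * x 5

/-- `f₃ = M₁² + M₂² + 2M₃² + aγ₁`. -/
def kovF₃ (a : ℝ) (x : Fin 6 → ℝ) : ℝ :=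
  x 3 ^ 2 + x 4 ^ 2 + 2 * x 5 ^ 2 + a * x 0

/-- The Kovalevskaya integral `f₄ = (M₁² − M₂² − aγ₁)² + (2M₁M₂ − aγ₂)²`. -/
def kovF₄ (a : ℝ) (x : Fin 6 → ℝ) : ℝ :=
  (x 3 ^ 2 - x 4 ^ 2 - a * x 0) ^ 2 + (2 * x 3 * x 4 - a * x 1) ^ 2

/-- Contraction of a matrix field with the gradient of a function:
`(P∇f)_i = ∑_j P_{ij} ∂f/∂x_j`. -/
def Pgrad {n : ℕ} (P : (Fin n → ℝ) → Matrix (Fin n) (Fin n) ℝ)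
    (f : (Fin n → ℝ) → ℝ) (x : Fin n → ℝ) (i : Fin n) : ℝ :=
  ∑ j, P x i j * pd j f x

/-- Lie derivative of a (2,0) tensor (matrix field) `P` along the vector field `X`:
`(L_X P)_{ij} = ∑_k (X_k ∂P_{ij}/∂x_k − P_{kj} ∂X_i/∂x_k − P_{ik} ∂X_j/∂x_k)`. -/
def matLie {n : ℕ} (X : (Fin n → ℝ) → Fin n → ℝ)
    (P : (Fin n → ℝ) → Matrix (Fin n) (Fin n) ℝ) (x : Fin n → ℝ) (i j : Fin n) : ℝ :=
  ∑ k, (X x k * pd k (fun y => P y i j) x - P x k j * pd k (fun y => X y i) x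
        - P x i k * pd k (fun y => X y j) x)

/-- The Jacobiator of an antisymmetric matrix field; it vanishes identically iff `P`
satisfies the Jacobi identity (i.e. is a Poisson bivector). -/
def jacobiator {n : ℕ} (P : (Fin n → ℝ) → Matrix (Fin n) (Fin n) ℝ)
    (x : Fin n → ℝ) (i j k : Fin n) : ℝ :=
  ∑ l, (P x l i * pd l (fun y => P y j k) x + P x l j * pd l (fun y => P y k i) x
        + P x l k * pd l (fun y => P y i j) x)

/-- The Levi-Civita symbol on three indices, `ε₀₁₂ = 1` (0-based). -/
def eps (i j k : Fin 3) : ℝ :=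
  (((j : ℕ) : ℝ) - ((i : ℕ) : ℝ)) * (((k : ℕ) : ℝ) - ((j : ℕ) : ℝ)) *
    (((k : ℕ) : ℝ) - ((i : ℕ) : ℝ)) / 2

/-- Components of the wedge product of three vectors:
`(u∧v∧w)^{abc} = u_a(v_bw_c − v_cw_b) − u_b(v_aw_c − v_cw_a) + u_c(v_aw_b − v_bw_a)`. -/
def wedge3 (u v w : Fin 6 → ℝ) (a b c : Fin 6) : ℝ :=
  u a * (v b * w c - v c * w b) - u b * (v a * w c - v c * w a)
    + u c * (v a * w b - v b * w a)

/-- The `i`-th standard basis vector `∂_i` of `ℝ⁶`. -/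
def e6 (i : Fin 6) : Fin 6 → ℝ := fun j => if j = i then 1 else 0

/-- Embedding of an index `i ∈ {1,2,3}` as the index of `∂_i` in `ℝ⁶`. -/
def lo (i : Fin 3) : Fin 6 := ⟨(i : ℕ), by have := i.isLt; omega⟩

/-- Embedding of an index `i ∈ {1,2,3}` as the index of `∂_{i+3}` in `ℝ⁶`. -/
def hi (i : Fin 3) : Fin 6 := ⟨(i : ℕ) + 3, by have := i.isLt; omega⟩

/-- Lie derivative along `X` of a trivector `T` with constant components:
`(L_X T)^{abc} = −∑_ℓ ((∂X_a/∂x_ℓ)T^{ℓbc} + (∂X_b/∂x_ℓ)T^{aℓc} + (∂X_c/∂x_ℓ)T^{abℓ})`. -/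
def triLie (X : (Fin 6 → ℝ) → Fin 6 → ℝ) (T : Fin 6 → Fin 6 → Fin 6 → ℝ)
    (x : Fin 6 → ℝ) (a b c : Fin 6) : ℝ :=
  -∑ l, (pd l (fun y => X y a) x * T l b c + pd l (fun y => X y b) x * T a l c
        + pd l (fun y => X y c) x * T a b l)

/-- The canonical Lie–Poisson bivector `P_c` on `e*(3)`:
`(i,j) ↦ 0` for `i,j ≤ 3`, `(i,j+3) ↦ ∑_k ε_{ijk}γ_k`, `(i+3,j+3) ↦ ∑_k ε_{ijk}M_k`. -/
def kovPc (x : Fin 6 → ℝ) : Matrix (Fin 6) (Fin 6) ℝ :=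
  !![0, 0, 0, 0, x 2, -(x 1);
     0, 0, 0, -(x 2), 0, x 0;
     0, 0, 0, x 1, -(x 0), 0;
     0, x 2, -(x 1), 0, x 5, -(x 4);
     -(x 2), 0, x 0, -(x 5), 0, x 3;
     x 1, -(x 0), 0, x 4, -(x 3), 0]

/-- The constant trivector `T = ∑_{i,j,k} ε_{ijk} ∂_i ∧ ∂_{j+3} ∧ ∂_{k+3}`. -/
def kovT (a b c : Fin 6) : ℝ :=
  ∑ i : Fin 3, ∑ j : Fin 3, ∑ k : Fin 3,
    eps i j k * wedge3 (e6 (lo i)) (e6 (hi j)) (e6 (hi k)) a b c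

section PartialDerivative

variable {n : ℕ} {f g : (Fin n → ℝ) → ℝ} {x : Fin n → ℝ}

lemma pd_coord (i j : Fin n) :
    pd i (fun y => y j) x = if i = j then 1 else 0 := by
  rw [pd, fderiv_apply differentiableAt_id j]
  simp [Pi.single_apply, eq_comm]

lemma pd_const (i : Fin n) (c : ℝ) : pd i (fun _ => c) x = 0 := by
  simp [pd]

lemma pd_add (hf : DifferentiableAt ℝ f x) (hg : DifferentiableAt ℝ g x) (i : Fin n) :
    pd i (fun y => f y + g y) x = pd i f x + pd i g x := by
  simp only [pd, fderiv_fun_add hf hg, add_apply]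

lemma pd_sub (hf : DifferentiableAt ℝ f x) (hg : DifferentiableAt ℝ g x) (i : Fin n) :
    pd i (fun y => f y - g y) x = pd i f x - pd i g x := by
  simp only [pd, fderiv_fun_sub hf hg, sub_apply]

lemma pd_neg (i : Fin n) : pd i (fun y => -f y) x = -pd i f x := by
  simp only [pd, fderiv_fun_neg, neg_apply]

lemma pd_mul (hf : DifferentiableAt ℝ f x) (hg : DifferentiableAt ℝ g x) (i : Fin n) :
    pd i (fun y => f y * g y) x = f x * pd i g x + pd i f x * g x := by
  simp only [pd, fderiv_fun_mul hf hg, add_apply, smul_apply, smul_eq_mul, mul_comm (g x)]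

lemma pd_pow (hf : DifferentiableAt ℝ f x) (m : ℕ) (i : Fin n) :
    pd i (fun y => f y ^ m) x = m * f x ^ (m - 1) * pd i f x := by
  simp only [pd, fderiv_fun_pow m hf, smul_apply, smul_eq_mul, nsmul_eq_mul]

end PartialDerivative

/-- `k + 3` is computed in `Fin 6`, i.e. mod 6: it exchanges the `γ` and `M` coordinates. -/
lemma pd_kovF₂ (x : Fin 6 → ℝ) (k : Fin 6) : pd k kovF₂ x = x (k + 3) := by
  unfold kovF₂
  simp (disch := fun_prop) only [pd_add, pd_mul, pd_coord]
  fin_cases k <;> simp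

lemma pd_kovF₃ (a : ℝ) (x : Fin 6 → ℝ) (k : Fin 6) :
    pd k (kovF₃ a) x = ![a, 0, 0, 2 * x 3, 2 * x 4, 4 * x 5] k := by
  unfold kovF₃
  simp (disch := fun_prop) only [pd_add, pd_mul, pd_coord, pd_pow, pd_const]
  fin_cases k <;> norm_num [← mul_assoc, Fin.ext_iff]

def kovJac (a : ℝ) (x : Fin 6 → ℝ) : Matrix (Fin 6) (Fin 6) ℝ :=
  !![0, -(4 * x 5), 2 * x 4, 0, 2 * x 2, -(4 * x 1);
     4 * x 5, 0, -(2 * x 3), -(2 * x 2), 0, 4 * x 0;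
     -(2 * x 4), 2 * x 3, 0, 2 * x 1, -(2 * x 0), 0;
     0, 0, 0, 0, -(2 * x 5), -(2 * x 4);
     0, 0, -a, 2 * x 5, 0, 2 * x 3;
     0, a, 0, 0, 0, 0]

lemma pd_kovX (a : ℝ) (x : Fin 6 → ℝ) (i l : Fin 6) :
    pd l (fun y => kovX a y i) x = kovJac a x i l := by
  fin_cases i <;>
    simp (disch := fun_prop) only [kovX, Fin.isValue, Fin.zero_eta, Fin.mk_one, Fin.reduceFinMk,
      Matrix.cons_val, pd_add, pd_sub, pd_neg, pd_mul, pd_coord, pd_const] <;>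
    fin_cases l <;> simp [kovJac]

lemma sum_eps_mul (F : Fin 3 → Fin 3 → Fin 3 → ℝ) :
    ∑ i, ∑ j, ∑ k, eps i j k * F i j k
      = F 0 1 2 - F 0 2 1 + F 1 2 0 - F 1 0 2 + F 2 0 1 - F 2 1 0 := by
  simp only [Fin.sum_univ_three, eps]
  norm_num
  ring

lemma wedge3_swap (u v w : Fin 6 → ℝ) (a b c : Fin 6) :
    wedge3 u w v a b c = -wedge3 u v w a b c := by
  simp only [wedge3]
  ring

lemma wedge3_swap_right (u v w : Fin 6 → ℝ) (a b c : Fin 6) :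
    wedge3 u v w a c b = -wedge3 u v w a b c := by
  simp only [wedge3]
  ring

lemma sum_wedge3_mul (u v w α : Fin 6 → ℝ) (a b : Fin 6) :
    ∑ c, wedge3 u v w a b c * α c
      = (u a * v b - u b * v a) * ∑ c, w c * α c - (u a * w b - u b * w a) * ∑ c, v c * α c
        + (v a * w b - v b * w a) * ∑ c, u c * α c := by
  simp only [wedge3, Finset.mul_sum, ← Finset.sum_sub_distrib, ← Finset.sum_add_distrib]
  exact Finset.sum_congr rfl fun c _ => by ring

lemma sum_e6_mul (p : Fin 6) (α : Fin 6 → ℝ) : ∑ c, e6 p c * α c = α p := by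
  simp [e6]

lemma kovT_eq (a b c : Fin 6) :
    kovT a b c = 2 * (wedge3 (e6 (lo 0)) (e6 (hi 1)) (e6 (hi 2)) a b c
      + wedge3 (e6 (lo 1)) (e6 (hi 2)) (e6 (hi 0)) a b c
      + wedge3 (e6 (lo 2)) (e6 (hi 0)) (e6 (hi 1)) a b c) := by
  rw [kovT, sum_eps_mul, wedge3_swap (e6 (lo 0)) (e6 (hi 1)), wedge3_swap (e6 (lo 1)) (e6 (hi 2)),
    wedge3_swap (e6 (lo 2)) (e6 (hi 0))]
  ring

lemma kovT_swap (a b c : Fin 6) : kovT a c b = -kovT a b c := by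
  simp only [kovT, ← Finset.sum_neg_distrib]
  refine Finset.sum_congr rfl fun i _ => Finset.sum_congr rfl fun j _ =>
    Finset.sum_congr rfl fun k _ => ?_
  rw [wedge3_swap_right, mul_neg]

lemma sum_kovT_mul_shift (y : Fin 6 → ℝ) (i j : Fin 6) :
    ∑ k, kovT i j k * y (k + 3) = 2 * kovPc y i j := by
  simp only [kovT_eq, mul_assoc, add_mul, Finset.sum_add_distrib, ← Finset.mul_sum, sum_wedge3_mul,
    sum_e6_mul]
  fin_cases i <;> fin_cases j <;> simp [e6, lo, hi, kovPc]

lemma kovX_eq_Pgrad (a : ℝ) (x : Fin 6 → ℝ) (i : Fin 6) :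
    kovX a x i = Pgrad kovPc (kovF₃ a) x i := by
  simp only [Pgrad, pd_kovF₃, Fin.sum_univ_six]
  fin_cases i <;> simp [kovX, kovPc] <;> ring

/-- The derivative of `X f₂ = 0`: `Jᵀ ∇f₂ = -Hess(f₂) X`. -/
lemma sum_kovJac_mul_shift (a : ℝ) (x : Fin 6 → ℝ) (l : Fin 6) :
    ∑ k, kovJac a x k l * x (k + 3) = -kovX a x (l + 3) := by
  simp only [Fin.sum_univ_six]
  fin_cases l <;> simp [kovJac, kovX] <;> ring

/-- `L_X P_c = 0`; as `P_c` is linear, its derivative along `X` is `P_c(X)`. -/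
lemma kovJac_mul_kovPc_add_kovPc_mul_transpose (a : ℝ) (x : Fin 6 → ℝ) :
    kovJac a x * kovPc x + kovPc x * (kovJac a x).transpose = kovPc (kovX a x) := by
  ext i j
  simp only [Matrix.add_apply, Matrix.mul_apply, Matrix.transpose_apply, Fin.sum_univ_six]
  fin_cases i <;> fin_cases j <;> simp [kovJac, kovPc, kovX] <;> ring

lemma sum_triLie_mul (X : (Fin 6 → ℝ) → Fin 6 → ℝ) (T : Fin 6 → Fin 6 → Fin 6 → ℝ)
    (x g : Fin 6 → ℝ) (i j : Fin 6) :
    ∑ k, triLie X T x i j k * g k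
      = -(∑ l, pd l (fun y => X y i) x * ∑ k, T l j k * g k
          + ∑ l, pd l (fun y => X y j) x * ∑ k, T i l k * g k
          + ∑ l, T i j l * ∑ k, pd l (fun y => X y k) x * g k) := by
  simp only [triLie, neg_mul, Finset.sum_neg_distrib, Finset.sum_mul, Finset.mul_sum, add_mul,
    Finset.sum_add_distrib]
  rw [Finset.sum_comm (f := fun k l => pd l (fun y => X y i) x * T l j k * g k),
    Finset.sum_comm (f := fun k l => pd l (fun y => X y j) x * T i l k * g k),
    Finset.sum_comm (f := fun k l => pd l (fun y => X y k) x * T i j l * g k)]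
  simp only [mul_assoc, mul_left_comm (T i j _)]

lemma sum_kovT_mul_pd_kovF₂ (x : Fin 6 → ℝ) (i j : Fin 6) :
    ∑ k, kovT i j k * pd k kovF₂ x = 2 * kovPc x i j := by
  simp only [pd_kovF₂, sum_kovT_mul_shift]

lemma sum_kovT_mul_pd_kovF₂_mul_pd_kovF₃ (a : ℝ) (x : Fin 6 → ℝ) (i : Fin 6) :
    ∑ j, ∑ k, kovT i j k * pd j kovF₂ x * pd k (kovF₃ a) x = -2 * kovX a x i := by
  have hT (k : Fin 6) : ∑ j, kovT i j k * pd j kovF₂ x = -(2 * kovPc x i k) := by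
    rw [← sum_kovT_mul_pd_kovF₂, ← Finset.sum_neg_distrib]
    exact Finset.sum_congr rfl fun j _ => by rw [kovT_swap, neg_mul]
  rw [Finset.sum_comm, kovX_eq_Pgrad, Pgrad, Finset.mul_sum]
  simp only [← Finset.sum_mul, hT]
  exact Finset.sum_congr rfl fun k _ => by ring

lemma sum_triLie_kovX_kovT_mul_pd_kovF₂ (a : ℝ) (x : Fin 6 → ℝ) (i j : Fin 6) :
    ∑ k, triLie (kovX a) kovT x i j k * pd k kovF₂ x = 0 := by
  have hX : ∑ l, kovT i j l * ∑ k, pd l (fun y => kovX a y k) x * pd k kovF₂ x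
      = -(2 * kovPc (kovX a x) i j) := by
    simp only [pd_kovX, pd_kovF₂, sum_kovJac_mul_shift, mul_neg, Finset.sum_neg_distrib,
      sum_kovT_mul_shift]
  have hP := congrFun (congrFun (kovJac_mul_kovPc_add_kovPc_mul_transpose a x) i) j
  simp only [Matrix.add_apply, Matrix.mul_apply, Matrix.transpose_apply,
    mul_comm (kovPc x i _)] at hP
  rw [sum_triLie_mul, hX]
  simp only [sum_kovT_mul_pd_kovF₂, pd_kovX, mul_left_comm _ (2 : ℝ), ← Finset.mul_sum]
  linear_combination (-2 : ℝ) * hP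

/-- The conditional numerical invariant `T` of the Kovalevskaya case:
(a) `T df₂ = 2P_c`; (b) `T df₂ df₃ = −2X`; (c) `(L_X T) df₂ = 0`. -/
theorem kovalevskaya_T (a : ℝ) (x : Fin 6 → ℝ) :
    (∀ i j : Fin 6, ∑ k, kovT i j k * pd k kovF₂ x = 2 * kovPc x i j) ∧
    (∀ i : Fin 6, ∑ j, ∑ k, kovT i j k * pd j kovF₂ x * pd k (kovF₃ a) x
      = -2 * kovX a x i) ∧
    (∀ i j : Fin 6, ∑ k, triLie (kovX a) kovT x i j k * pd k kovF₂ x = 0) :=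
  ⟨sum_kovT_mul_pd_kovF₂ x, sum_kovT_mul_pd_kovF₂_mul_pd_kovF₃ a x,
    sum_triLie_kovX_kovT_mul_pd_kovF₂ a x⟩
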